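/- Let B_l be independent Bernoulli with Pr{B_l=1} = 1/(1+e^{λ2^l}) for λ > 0. Then for any t < λ, the moment generating function of B = Σ_{l=-∞}^{∞} 2^l B_l equals λ/(λ - t). -/

import Mathlib

/-!
The summand `2 ^ l * B l` has mgf `(1 + e^{-(λ-t) 2^l}) / (1 + e^{-λ 2^l})`. Since
`(1 - q) (1 + q) = 1 - q ^ 2`, products of `1 + e^{-c 2^l}` over `l ∈ [m, n)` telescope to
`(1 - e^{-c 2^n}) / (1 - e^{-c 2^m})`, so by independence the mgf of the partial sum over
`[-N, N)` is `R (2^{-N}) / R (2^N)` with `R x = (1 - e^{-λx}) / (1 - e^{-(λ-t)x})`. As `N → ∞`,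
`R (2^N) → 1`, while `R (2^{-N}) → λ / (λ - t)`, the ratio of the derivatives at `0`.
The partial sums increase to `B`, so monotone convergence (increasing for `t ≥ 0`, decreasing
for `t < 0`) identifies the mgf of `B` with this limit.
-/

open MeasureTheory ProbabilityTheory Filter Topology Real Finset

lemma one_sub_mul_prod_Ico_one_add_of_sq {R : Type*} [CommRing R] {f : ℤ → R}
    (hf : ∀ l, f (l + 1) = f l ^ 2) {a b : ℤ} (hab : a ≤ b) :
    (1 - f a) * ∏ l ∈ Ico a b, (1 + f l) = 1 - f b := by
  induction b, hab using Int.leInduction with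
  | base => simp
  | succ b hab ih =>
    rw [← insert_Ico_right_eq_Ico_add_one_of_not_isMax hab (not_isMax b),
      prod_insert right_notMem_Ico, mul_left_comm, ih, hf]
    ring

lemma exp_neg_mul_two_zpow_add_one (c : ℝ) (l : ℤ) :
    exp (-(c * 2 ^ (l + 1))) = exp (-(c * 2 ^ l)) ^ 2 := by
  rw [sq, ← exp_add, zpow_add_one₀ two_ne_zero]
  ring_nf

lemma one_sub_exp_neg_mul_pos {c x : ℝ} (hc : 0 < c) (hx : 0 < x) : 0 < 1 - exp (-(c * x)) := by
  rw [sub_pos, exp_lt_one_iff, neg_lt_zero]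
  positivity

lemma prod_Ico_one_add_exp_neg_mul_two_zpow {c : ℝ} (hc : 0 < c) {a b : ℤ} (hab : a ≤ b) :
    ∏ l ∈ Ico a b, (1 + exp (-(c * 2 ^ l))) =
      (1 - exp (-(c * 2 ^ b))) / (1 - exp (-(c * 2 ^ a))) := by
  rw [eq_div_iff (one_sub_exp_neg_mul_pos hc (by positivity)).ne', mul_comm]
  exact one_sub_mul_prod_Ico_one_add_of_sq (f := fun l => exp (-(c * 2 ^ l)))
    (exp_neg_mul_two_zpow_add_one c) hab

noncomputable def oneSubExpNegRatio (a b x : ℝ) : ℝ :=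
  (1 - exp (-(a * x))) / (1 - exp (-(b * x)))

lemma prod_Ico_div_eq_oneSubExpNegRatio {a b : ℝ} (ha : 0 < a) (hb : 0 < b) {m n : ℤ}
    (hmn : m ≤ n) :
    ∏ l ∈ Ico m n, (1 + exp (-(b * 2 ^ l))) / (1 + exp (-(a * 2 ^ l))) =
      oneSubExpNegRatio a b (2 ^ m) / oneSubExpNegRatio a b (2 ^ n) := by
  have hne (c : ℝ) (hc : 0 < c) (k : ℤ) : 1 - exp (-(c * 2 ^ k)) ≠ 0 :=
    (one_sub_exp_neg_mul_pos hc (zpow_pos two_pos k)).ne'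
  rw [prod_div_distrib, prod_Ico_one_add_exp_neg_mul_two_zpow ha hmn,
    prod_Ico_one_add_exp_neg_mul_two_zpow hb hmn, oneSubExpNegRatio, oneSubExpNegRatio]
  field_simp [hne a ha m, hne a ha n, hne b hb m, hne b hb n]

lemma tendsto_one_sub_exp_neg_mul_div_nhdsNE (c : ℝ) :
    Tendsto (fun x => (1 - exp (-(c * x))) / x) (𝓝[≠] 0) (𝓝 c) := by
  have hderiv : HasDerivAt (fun x => -exp (-(c * x))) c 0 := by
    simpa [Pi.neg_def] using (((hasDerivAt_id (0 : ℝ)).const_mul c).neg.exp).neg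
  refine (hasDerivAt_iff_tendsto_slope_zero.mp hderiv).congr fun x => ?_
  simp only [zero_add, mul_zero, neg_zero, exp_zero, smul_eq_mul]
  ring

lemma tendsto_oneSubExpNegRatio_nhdsNE (a : ℝ) {b : ℝ} (hb : b ≠ 0) :
    Tendsto (oneSubExpNegRatio a b) (𝓝[≠] 0) (𝓝 (a / b)) := by
  refine ((tendsto_one_sub_exp_neg_mul_div_nhdsNE a).div
    (tendsto_one_sub_exp_neg_mul_div_nhdsNE b) hb).congr' ?_
  filter_upwards [self_mem_nhdsWithin] with x hx
  exact div_div_div_cancel_right₀ hx _ _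

lemma tendsto_one_sub_exp_neg_mul_atTop {c : ℝ} (hc : 0 < c) :
    Tendsto (fun x => 1 - exp (-(c * x))) atTop (𝓝 1) := by
  simpa using tendsto_const_nhds.sub
    (tendsto_exp_atBot.comp (tendsto_neg_atTop_atBot.comp (tendsto_id.const_mul_atTop hc)))

lemma tendsto_oneSubExpNegRatio_atTop {a b : ℝ} (ha : 0 < a) (hb : 0 < b) :
    Tendsto (oneSubExpNegRatio a b) atTop (𝓝 1) := by
  unfold oneSubExpNegRatio
  simpa [Pi.div_def] using (tendsto_one_sub_exp_neg_mul_atTop ha).div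
    (tendsto_one_sub_exp_neg_mul_atTop hb) one_ne_zero

lemma tendsto_oneSubExpNegRatio_two_zpow_div {a b : ℝ} (ha : 0 < a) (hb : 0 < b) :
    Tendsto (fun N : ℕ => oneSubExpNegRatio a b (2 ^ (-(N : ℤ))) /
      oneSubExpNegRatio a b (2 ^ (N : ℤ))) atTop (𝓝 (a / b)) := by
  have hpow : Tendsto (fun N : ℕ => (2 : ℝ) ^ N) atTop atTop :=
    tendsto_pow_atTop_atTop_of_one_lt one_lt_two
  have hsmall := (tendsto_oneSubExpNegRatio_nhdsNE a hb.ne').comp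
    ((tendsto_inv_atTop_nhdsGT_zero.mono_right (nhdsGT_le_nhdsNE 0)).comp hpow)
  simpa [Function.comp_def, Pi.div_def] using hsmall.div
    ((tendsto_oneSubExpNegRatio_atTop ha hb).comp hpow) one_ne_zero

section ZeroOne

lemma exp_mul_of_eq_zero_or_eq_one {x : ℝ} (hx : x = 0 ∨ x = 1) (t : ℝ) :
    exp (t * x) = 1 + (exp t - 1) * x := by
  rcases hx with rfl | rfl <;> simp

lemma eq_indicator_of_eq_zero_or_eq_one {α : Type*} {X : α → ℝ}
    (hX : ∀ a, X a = 0 ∨ X a = 1) :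
    X = {a | X a = 1}.indicator 1 := by
  ext a
  rcases hX a with h | h <;> simp [Set.indicator, h]

variable {Ω : Type*} [MeasurableSpace Ω] {μ : Measure Ω} {X : Ω → ℝ}

lemma integral_eq_measureReal_of_eq_zero_or_eq_one (hXm : Measurable X)
    (hX : ∀ ω, X ω = 0 ∨ X ω = 1) : ∫ ω, X ω ∂μ = μ.real {ω | X ω = 1} := by
  conv_lhs => rw [eq_indicator_of_eq_zero_or_eq_one hX]
  exact integral_indicator_one (hXm (measurableSet_singleton 1))

lemma integrable_of_eq_zero_or_eq_one [IsFiniteMeasure μ] (hXm : Measurable X)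
    (hX : ∀ ω, X ω = 0 ∨ X ω = 1) :
    Integrable X μ := by
  rw [eq_indicator_of_eq_zero_or_eq_one hX]
  exact (integrable_const 1).indicator (hXm (measurableSet_singleton 1))

lemma integrable_exp_mul_of_eq_zero_or_eq_one [IsFiniteMeasure μ] (hXm : Measurable X)
    (hX : ∀ ω, X ω = 0 ∨ X ω = 1) (t : ℝ) : Integrable (fun ω => exp (t * X ω)) μ := by
  simp_rw [exp_mul_of_eq_zero_or_eq_one (hX _)]
  exact (integrable_const 1).add ((integrable_of_eq_zero_or_eq_one hXm hX).const_mul _)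

lemma mgf_of_eq_zero_or_eq_one [IsProbabilityMeasure μ] (hXm : Measurable X)
    (hX : ∀ ω, X ω = 0 ∨ X ω = 1) (t : ℝ) :
    mgf X μ t = 1 + (exp t - 1) * μ.real {ω | X ω = 1} := by
  simp_rw [mgf, exp_mul_of_eq_zero_or_eq_one (hX _)]
  rw [integral_add (integrable_const 1) ((integrable_of_eq_zero_or_eq_one hXm hX).const_mul _),
    integral_const_mul, integral_eq_measureReal_of_eq_zero_or_eq_one hXm hX]
  simp

lemma mgf_const_mul_of_eq_zero_or_eq_one [IsProbabilityMeasure μ] (hXm : Measurable X)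
    (hX : ∀ ω, X ω = 0 ∨ X ω = 1) {lam c : ℝ}
    (hp : μ {ω | X ω = 1} = ENNReal.ofReal (1 / (1 + exp (lam * c)))) (t : ℝ) :
    mgf (fun ω => c * X ω) μ t = (1 + exp (-((lam - t) * c))) / (1 + exp (-(lam * c))) := by
  rw [mgf_const_mul, mgf_of_eq_zero_or_eq_one hXm hX, measureReal_def, hp,
    ENNReal.toReal_ofReal (by positivity), show -((lam - t) * c) = c * t - lam * c by ring,
    exp_sub, exp_neg]
  field_simp
  ring

end ZeroOne

section MonotoneLimit

variable {Ω : Type*} [MeasurableSpace Ω] {μ : Measure Ω} {S : ℕ → Ω → ℝ} {Y : Ω → ℝ}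
  {t : ℝ}

lemma tendsto_lintegral_exp_mul_of_monotone (hS : ∀ N, AEMeasurable (S N) μ)
    (hmono : ∀ᵐ ω ∂μ, Monotone (S · ω))
    (hlim : ∀ᵐ ω ∂μ, Tendsto (S · ω) atTop (𝓝 (Y ω)))
    (hint : Integrable (fun ω => exp (t * S 0 ω)) μ) :
    Tendsto (fun N => ∫⁻ ω, ENNReal.ofReal (exp (t * S N ω)) ∂μ) atTop
      (𝓝 (∫⁻ ω, ENNReal.ofReal (exp (t * Y ω)) ∂μ)) := by
  have hmeas N : AEMeasurable (fun ω => ENNReal.ofReal (exp (t * S N ω))) μ :=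
    ((hS N).const_mul t).exp.ennreal_ofReal
  have hlim' : ∀ᵐ ω ∂μ, Tendsto (fun N => ENNReal.ofReal (exp (t * S N ω))) atTop
      (𝓝 (ENNReal.ofReal (exp (t * Y ω)))) :=
    hlim.mono fun ω h => (ENNReal.continuous_ofReal.comp
      (continuous_exp.comp (continuous_const_mul t))).continuousAt.tendsto.comp h
  rcases le_or_gt 0 t with ht | ht
  · refine lintegral_tendsto_of_tendsto_of_monotone hmeas ?_ hlim'
    filter_upwards [hmono] with ω h N M hNM
    exact ENNReal.ofReal_le_ofReal (exp_le_exp.2 (mul_le_mul_of_nonneg_left (h hNM) ht))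
  · refine lintegral_tendsto_of_tendsto_of_antitone hmeas ?_ hint.lintegral_lt_top.ne hlim'
    filter_upwards [hmono] with ω h N M hNM
    exact ENNReal.ofReal_le_ofReal (exp_le_exp.2 (mul_le_mul_of_nonpos_left (h hNM) ht.le))

lemma mgf_eq_of_tendsto_of_monotone (hS : ∀ N, AEMeasurable (S N) μ)
    (hmono : ∀ᵐ ω ∂μ, Monotone (S · ω))
    (hlim : ∀ᵐ ω ∂μ, Tendsto (S · ω) atTop (𝓝 (Y ω)))
    (hint : ∀ N, Integrable (fun ω => exp (t * S N ω)) μ) {m : ℝ}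
    (hm : Tendsto (fun N => mgf (S N) μ t) atTop (𝓝 m)) :
    mgf Y μ t = m := by
  have hexp_nonneg : ∀ Z : Ω → ℝ, 0 ≤ᵐ[μ] fun ω => exp (t * Z ω) :=
    fun Z => ae_of_all _ fun ω => (exp_pos _).le
  have hY : AEMeasurable Y μ := aemeasurable_of_tendsto_metrizable_ae atTop hS hlim
  have hofReal : Tendsto (fun N => ∫⁻ ω, ENNReal.ofReal (exp (t * S N ω)) ∂μ) atTop
      (𝓝 (ENNReal.ofReal m)) := by
    refine ((ENNReal.continuous_ofReal.tendsto m).comp hm).congr fun N => ?_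
    exact ofReal_integral_eq_lintegral_ofReal (hint N) (hexp_nonneg (S N))
  rw [mgf, integral_eq_lintegral_of_nonneg_ae (hexp_nonneg Y)
      ((hY.const_mul t).exp.aestronglyMeasurable),
    tendsto_nhds_unique (tendsto_lintegral_exp_mul_of_monotone hS hmono hlim (hint 0)) hofReal,
    ENNReal.toReal_ofReal (ge_of_tendsto' hm fun N => mgf_nonneg)]

end MonotoneLimit

theorem stmt_5 {Ω : Type*} [MeasurableSpace Ω] (μ : Measure Ω) [IsProbabilityMeasure μ]
    (lam : ℝ) (hlam : 0 < lam) (B : ℤ → Ω → ℝ)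
    (hmeas : ∀ l, Measurable (B l))
    (hval : ∀ l ω, B l ω = 0 ∨ B l ω = 1)
    (hindep : iIndepFun B μ)
    (hber : ∀ l : ℤ,
      μ {ω | B l ω = 1} = ENNReal.ofReal (1 / (1 + Real.exp (lam * 2 ^ l))))
    (hsum : ∀ᵐ ω ∂μ, Summable fun l : ℤ => (2 : ℝ) ^ l * B l ω)
    (t : ℝ) (ht : t < lam) :
    mgf (fun ω => ∑' l : ℤ, (2 : ℝ) ^ l * B l ω) μ t = lam / (lam - t) := by
  set X : ℤ → Ω → ℝ := fun l ω => 2 ^ l * B l ω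
  set S : ℕ → Ω → ℝ := fun N => ∑ l ∈ Ico (-(N : ℤ)) N, X l
  have hXm l : Measurable (X l) := (hmeas l).const_mul _
  have hXind : iIndepFun X μ := hindep.comp _ fun l => measurable_const_mul _
  have hX_nonneg l ω : 0 ≤ X l ω :=
    mul_nonneg (by positivity) (by rcases hval l ω with h | h <;> simp [h])
  have hmgfS N : mgf (S N) μ t = oneSubExpNegRatio lam (lam - t) (2 ^ (-(N : ℤ))) /
      oneSubExpNegRatio lam (lam - t) (2 ^ (N : ℤ)) := by
    rw [hXind.mgf_sum hXm, ← prod_Ico_div_eq_oneSubExpNegRatio hlam (sub_pos.2 ht) (by omega)]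
    exact prod_congr rfl fun l _ =>
      mgf_const_mul_of_eq_zero_or_eq_one (hmeas l) (hval l) (hber l) t
  refine mgf_eq_of_tendsto_of_monotone (S := S)
    (fun N => Finset.aemeasurable_sum _ fun l _ => (hXm l).aemeasurable) ?_ ?_ (fun N => ?_)
    ((tendsto_oneSubExpNegRatio_two_zpow_div hlam (sub_pos.2 ht)).congr fun N => (hmgfS N).symm)
  · refine ae_of_all _ fun ω N M hNM => ?_
    simp only [S, Finset.sum_apply]
    exact sum_le_sum_of_subset_of_nonneg (Ico_subset_Ico (by omega) (by omega))
      fun l _ _ => hX_nonneg l ω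
  · filter_upwards [hsum] with ω h
    simpa [S, X, Finset.sum_apply, Function.comp_def] using h.hasSum.comp tendsto_Ico_neg
  · refine hXind.integrable_exp_mul_sum hXm fun l _ => ?_
    simpa [X, mul_assoc] using
      integrable_exp_mul_of_eq_zero_or_eq_one (μ := μ) (hmeas l) (hval l) (t * 2 ^ l)
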